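/- Let φ : ℝ⁺ → ℝ⁺ be continuous and increasing with φ(x) → 0 as x → 0. Suppose there exist sequences (E_j) in ℝ, (ε_j) of positive reals with ε_j → 0, and (p_j) of positive reals, such that for a fixed E_0 and a function k : ℝ → ℝ one has |E_0 - E_j| ≤ 2ε_j, |k(E_0) - k(E_j)| ≥ 1/(2 p_j), E_j ≠ E_0, and log(ε_j^{-1}) ≥ p_{j-1} · p_j · φ(2 ε_j) with p_{j-1} → ∞. Then limsup_{E → E_0} |k(E) - k(E_0)| · log(|E - E_0|^{-1}) / φ(|E - E_0|) = ∞. -/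
import Mathlib


open Filter Real

/-- Given `φ : ℝ⁺ → ℝ⁺` continuous increasing with `φ(0⁺) = 0`, and sequences
of witnesses `E_j → E_0` with `|E_0 - E_j| ≤ 2ε_j`, `|k(E_0) - k(E_j)| ≥ 1/(2p_j)`,
`log(ε_j⁻¹) ≥ p_{j-1} p_j φ(2ε_j)` and `p_{j-1} → ∞`, the limsup as `E → E_0` of
`|k(E) - k(E_0)| log(|E - E_0|⁻¹) / φ(|E - E_0|)` is `+∞`. -/
theorem limsup_ids_quotient_infinite
    (φ : ℝ → ℝ) (hφpos : ∀ x, 0 < x → 0 < φ x)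
    (hφcont : ContinuousOn φ (Set.Ioi 0)) (hφmono : StrictMonoOn φ (Set.Ioi 0))
    (hφ0 : Tendsto φ (nhdsWithin 0 (Set.Ioi 0)) (nhds 0))
    (k : ℝ → ℝ) (E₀ : ℝ) (E : ℕ → ℝ) (ε p : ℕ → ℝ)
    (hεpos : ∀ j, 0 < ε j) (hεsmall : ∀ j, 2 * ε j < 1)
    (hε0 : Tendsto ε atTop (nhds 0)) (hppos : ∀ j, 0 < p j)
    (hclose : ∀ j, |E₀ - E j| ≤ 2 * ε j)
    (hjump : ∀ j, 1 / (2 * p j) ≤ |k E₀ - k (E j)|)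
    (hne : ∀ j, E j ≠ E₀)
    (hlog : ∀ j, 1 ≤ j → p (j - 1) * p j * φ (2 * ε j) ≤ Real.log (ε j)⁻¹)
    (hptop : Tendsto (fun j => p (j - 1)) atTop atTop) :
    ∀ M : ℝ, ∃ᶠ x in nhdsWithin E₀ {E₀}ᶜ,
      M < |k x - k E₀| * Real.log |x - E₀|⁻¹ / φ |x - E₀| := by
  intro M
  have hEtend : Tendsto E atTop (nhds E₀) := by
    rw [tendsto_iff_dist_tendsto_zero]
    apply squeeze_zero (fun j => dist_nonneg) (fun j => ?_)
      (by simpa using hε0.const_mul 2)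
    rw [Real.dist_eq, abs_sub_comm]
    exact hclose j
  have hEtend' : Tendsto E atTop (nhdsWithin E₀ {E₀}ᶜ) :=
    tendsto_nhdsWithin_of_tendsto_nhds_of_eventually_within _ hEtend
      (Eventually.of_forall fun j => hne j)
  refine hEtend'.frequently (Eventually.frequently ?_)
  have h1 : ∀ᶠ j : ℕ in atTop, 1 ≤ j := eventually_ge_atTop 1
  have h2 : ∀ᶠ j in atTop, ε j < 1/4 :=
    hε0.eventually (gt_mem_nhds (by norm_num : (0:ℝ) < 1/4))
  have h3 : ∀ᶠ j in atTop, 4 * M < p (j - 1) := hptop.eventually_gt_atTop (4 * M)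
  filter_upwards [h1, h2, h3] with j hj1 hj2 hj3
  set d := |E j - E₀| with hd
  have hd0 : 0 < d := abs_pos.mpr (sub_ne_zero.mpr (hne j))
  have hdle : d ≤ 2 * ε j := by rw [hd, abs_sub_comm]; exact hclose j
  have hεj := hεpos j
  have h2ε : (0:ℝ) < 2 * ε j := by linarith
  have hφd : 0 < φ d := hφpos d hd0
  have hφ2ε : 0 < φ (2 * ε j) := hφpos _ h2ε
  have hφle : φ d ≤ φ (2 * ε j) := hφmono.monotoneOn hd0 h2ε hdle
  have hpj := hppos j
  have hpj1 := hppos (j - 1)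
  have hA : 1 / (2 * p j) ≤ |k (E j) - k E₀| := by
    rw [abs_sub_comm]; exact hjump j
  -- log estimates
  have h4 : (4:ℝ) ≤ (ε j)⁻¹ := by
    calc (4:ℝ) = ((4:ℝ)⁻¹)⁻¹ := by norm_num
      _ ≤ (ε j)⁻¹ := inv_anti₀ hεj (by linarith)
  have hlog4 : Real.log 4 ≤ Real.log (ε j)⁻¹ :=
    Real.log_le_log (by norm_num) h4
  have hlog4eq : Real.log 4 = 2 * Real.log 2 := by
    rw [show (4:ℝ) = 2 * 2 by norm_num, Real.log_mul two_ne_zero two_ne_zero]; ring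
  have hlog2e : Real.log (2 * ε j)⁻¹ = Real.log (ε j)⁻¹ - Real.log 2 := by
    rw [Real.log_inv, Real.log_inv, Real.log_mul two_ne_zero hεj.ne']; ring
  have hloghalf : (1/2) * Real.log (ε j)⁻¹ ≤ Real.log (2 * ε j)⁻¹ := by
    rw [hlog2e]; linarith [hlog4, hlog4eq]
  have hlogd : Real.log (2 * ε j)⁻¹ ≤ Real.log d⁻¹ :=
    Real.log_le_log (by positivity) (by
      exact inv_anti₀ hd0 hdle)
  have hL : (1/2) * (p (j-1) * p j * φ (2 * ε j)) ≤ Real.log d⁻¹ := by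
    have := hlog j hj1
    nlinarith [hloghalf, hlogd]
  have hL0 : (0:ℝ) < (1/2) * (p (j-1) * p j * φ (2 * ε j)) := by positivity
  have step1 : (1 / (2 * p j)) * ((1/2) * (p (j-1) * p j * φ (2 * ε j))) / φ (2 * ε j)
      ≤ |k (E j) - k E₀| * Real.log d⁻¹ / φ d := by
    apply div_le_div₀
    · exact mul_nonneg (abs_nonneg _) (le_of_lt (lt_of_lt_of_le hL0 hL))
    · exact mul_le_mul hA hL (le_of_lt hL0) (abs_nonneg _)
    · exact hφd
    · exact hφle
  have step0 : (1 / (2 * p j)) * ((1/2) * (p (j-1) * p j * φ (2 * ε j))) / φ (2 * ε j)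
      = p (j-1) / 4 := by
    field_simp
    ring
  rw [step0] at step1
  calc M < p (j-1) / 4 := by linarith
    _ ≤ _ := step1
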